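/- arXiv:1210.6202 — 5 statements merged into one kernel-verified Lean document; each statement's English description precedes it below -/
import Mathlib

section
/- Let N ≥ 1 and let a, b be integers with gcd(N, a, b) = 1. Suppose every residue j mod N can be written as j ≡ m·a + n·b (mod N) with |m| + |n| ≤ k. Then in the directed Cayley graph on Z_{2N} where each even vertex i has out-neighbors i + α and i + β and each odd vertex j has out-neighbors j + γ and j + δ, with α = −1, β = 2(b−a) − 1, γ = 2a + 1, δ = −2b + 1 (all taken mod 2N), every vertex is reachable from vertex 0 by a directed path of length at most 2k + 1. -/
/-- A directed walk of length `l` from `u` to `v` in the digraph with arc relation `Adj`. -/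
def DWalk {V : Type*} (Adj : V → V → Prop) (u v : V) (l : ℕ) : Prop :=
  ∃ f : ℕ → V, f 0 = u ∧ f l = v ∧ ∀ i < l, Adj (f i) (f (i + 1))

/-- The arc relation of the New Amsterdam digraph `NA(N; α, β, γ, δ)`:
even vertices step by `α` or `β`, odd vertices step by `γ` or `δ`. -/
def NAstep (N : ℕ) (α β γ δ : ℤ) (i j : ZMod N) : Prop :=
  (Even i.val ∧ (j = i + (α : ZMod N) ∨ j = i + (β : ZMod N))) ∨
  (¬ Even i.val ∧ (j = i + (γ : ZMod N) ∨ j = i + (δ : ZMod N)))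

lemma DWalk.trans {V : Type*} {Adj : V → V → Prop} {u v w : V} {l1 l2 : ℕ}
    (h1 : DWalk Adj u v l1) (h2 : DWalk Adj v w l2) : DWalk Adj u w (l1 + l2) := by
  obtain ⟨f, hf0, hfl, hf⟩ := h1
  obtain ⟨g, hg0, hgl, hg⟩ := h2
  refine ⟨fun i => if i ≤ l1 then f i else g (i - l1), by simp [hf0], ?_, ?_⟩
  · by_cases h : l2 = 0
    · subst h; simpa using hfl.trans (hg0 ▸ hgl.symm).symm
    · have : ¬ (l1 + l2 ≤ l1) := by omega
      simp only [this, if_false]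
      rw [Nat.add_sub_cancel_left, hgl]
  · intro i hi
    rcases lt_trichotomy i l1 with h | h | h
    · have h1' : i ≤ l1 := h.le
      have h2' : i + 1 ≤ l1 := h
      simp only [h1', h2', if_true]
      exact hf i h
    · subst h
      have h2' : ¬ (i + 1 ≤ i) := by omega
      simp only [le_refl, if_true, h2', if_false, Nat.add_sub_cancel_left]
      rw [hfl, ← hg0]
      exact hg 0 (by omega)
    · have h1' : ¬ (i ≤ l1) := by omega
      have h2' : ¬ (i + 1 ≤ l1) := by omega
      simp only [h1', h2', if_false]
      have : i + 1 - l1 = (i - l1) + 1 := by omega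
      rw [this]
      exact hg (i - l1) (by omega)

section Main

variable (N : ℕ) (a b : ℤ)

local notation "A" => NAstep (2 * N) (-1) (2 * (b - a) - 1) (2 * a + 1) (-2 * b + 1)

lemma two_dvd : (2 : ℕ) ∣ 2 * N := ⟨N, rfl⟩

noncomputable def phi : ZMod (2 * N) →+* ZMod 2 := ZMod.castHom (two_dvd N) (ZMod 2)

lemma even_iff_phi [NeZero (2 * N)] (x : ZMod (2 * N)) : Even x.val ↔ phi N x = 0 := by
  rw [even_iff_two_dvd, ← ZMod.natCast_eq_zero_iff]
  rw [phi, ZMod.castHom_apply, ZMod.natCast_val]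

lemma phi_intCast (c : ℤ) : phi N ((c : ZMod (2 * N))) = (c : ZMod 2) := by
  simp [phi]

lemma odd_cast_two (c : ℤ) (hc : Odd c) : ((c : ZMod 2)) = 1 := by
  obtain ⟨t, ht⟩ := hc
  subst ht
  push_cast
  have : (2 : ZMod 2) = 0 := by decide
  rw [this]; ring

lemma even_double_cast [NeZero (2 * N)] (z : ℤ) :
    Even (((2 * z : ℤ) : ZMod (2 * N))).val := by
  rw [even_iff_phi, phi_intCast]
  push_cast
  have : (2 : ZMod 2) = 0 := by decide
  rw [this]; ring

lemma two_step [NeZero (2 * N)] (x : ZMod (2 * N)) (hx : Even x.val) (c : ℤ)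
    (hc : c = a ∨ c = -a ∨ c = b ∨ c = -b) :
    DWalk A x (x + ((2 * c : ℤ) : ZMod (2 * N))) 2 := by
  have hmidodd : ∀ μ : ℤ, Odd μ → ¬ Even ((x + (μ : ZMod (2 * N))).val) := by
    intro μ hμ h
    rw [even_iff_phi] at h hx
    rw [map_add, hx, phi_intCast, odd_cast_two _ hμ, zero_add] at h
    exact one_ne_zero h
  obtain ⟨μ, ν, hμ, hmu, hsum⟩ :
      ∃ μ ν : ℤ, Odd μ ∧ (μ = -1 ∨ μ = 2 * (b - a) - 1) ∧
        ((ν = 2 * a + 1 ∨ ν = -2 * b + 1) ∧ μ + ν = 2 * c) := by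
    rcases hc with h | h | h | h
    · exact ⟨-1, 2 * a + 1, ⟨-1, by ring⟩, Or.inl rfl, Or.inl rfl, by rw [h]; ring⟩
    · exact ⟨2 * (b - a) - 1, -2 * b + 1, ⟨b - a - 1, by ring⟩, Or.inr rfl, Or.inr rfl,
        by rw [h]; ring⟩
    · exact ⟨2 * (b - a) - 1, 2 * a + 1, ⟨b - a - 1, by ring⟩, Or.inr rfl, Or.inl rfl,
        by rw [h]; ring⟩
    · exact ⟨-1, -2 * b + 1, ⟨-1, by ring⟩, Or.inl rfl, Or.inr rfl, by rw [h]; ring⟩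
  refine ⟨fun i => if i = 0 then x else if i = 1 then x + (μ : ZMod (2 * N))
    else x + ((2 * c : ℤ) : ZMod (2 * N)), rfl, rfl, ?_⟩
  intro i hi
  interval_cases i
  · simp only [if_true, one_ne_zero, if_false]
    exact Or.inl ⟨hx, by rcases hmu with rfl | rfl <;> [left; right] <;> rfl⟩
  · simp only [if_false, if_true]
    refine Or.inr ⟨hmidodd μ hμ, ?_⟩
    have key : x + ((2 * c : ℤ) : ZMod (2 * N)) = x + (μ : ZMod (2 * N)) + (ν : ZMod (2 * N)) := by
      have : ((2 * c : ℤ) : ZMod (2 * N)) = (μ : ZMod (2 * N)) + (ν : ZMod (2 * N)) := by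
        rw [← Int.cast_add, hsum.2]
      rw [this]; ring
    rcases hsum.1 with rfl | rfl
    · exact Or.inl key
    · exact Or.inr key

lemma step_one [NeZero (2 * N)] (z c : ℤ) (hc : c = a ∨ c = -a ∨ c = b ∨ c = -b) (s : ℕ)
    (h : DWalk A 0 ((2 * z : ℤ) : ZMod (2 * N)) (2 * s)) :
    DWalk A 0 ((2 * (z + c) : ℤ) : ZMod (2 * N)) (2 * (s + 1)) := by
  have hend : Even ((((2 * z : ℤ)) : ZMod (2 * N))).val := even_double_cast N z
  have step := two_step N a b _ hend c hc
  have := DWalk.trans h step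
  have heq : (((2 * z : ℤ)) : ZMod (2 * N)) + ((2 * c : ℤ) : ZMod (2 * N))
      = ((2 * (z + c) : ℤ) : ZMod (2 * N)) := by
    rw [← Int.cast_add]; congr 1; ring
  rw [heq] at this
  have hlen : 2 * s + 2 = 2 * (s + 1) := by omega
  rwa [hlen] at this

lemma reach_even [NeZero (2 * N)] : ∀ s : ℕ, ∀ m n : ℤ, m.natAbs + n.natAbs = s →
    DWalk A 0 ((2 * (m * a + n * b) : ℤ) : ZMod (2 * N)) (2 * s) := by
  intro s
  induction s with
  | zero =>
    intro m n h
    have hm : m = 0 := by omega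
    have hn : n = 0 := by omega
    subst hm; subst hn
    refine ⟨fun _ => 0, rfl, by norm_num, fun i hi => absurd hi (by omega)⟩
  | succ s ih =>
    intro m n h
    rcases lt_trichotomy m 0 with hm | hm | hm
    · have := step_one N a b (((m + 1) * a + n * b)) (-a) (by tauto) s
        (ih (m + 1) n (by omega))
      have heq : ((m + 1) * a + n * b) + -a = m * a + n * b := by ring
      rwa [heq] at this
    · subst hm
      rcases lt_trichotomy n 0 with hn | hn | hn
      · have := step_one N a b ((0 * a + (n + 1) * b)) (-b) (by tauto) s
          (ih 0 (n + 1) (by omega))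
        have heq : (0 * a + (n + 1) * b) + -b = 0 * a + n * b := by ring
        rwa [heq] at this
      · omega
      · have := step_one N a b ((0 * a + (n - 1) * b)) b (by tauto) s
          (ih 0 (n - 1) (by omega))
        have heq : (0 * a + (n - 1) * b) + b = 0 * a + n * b := by ring
        rwa [heq] at this
    · have := step_one N a b (((m - 1) * a + n * b)) a (by tauto) s
        (ih (m - 1) n (by omega))
      have heq : ((m - 1) * a + n * b) + a = m * a + n * b := by ring
      rwa [heq] at this

end Main

theorem stmt_4 (N : ℕ) (hN : 1 ≤ N) (a b : ℤ) (k : ℕ)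
    (hgcd : Int.gcd (N : ℤ) (Int.gcd a b) = 1)
    (hcov : ∀ j : ℤ, ∃ m n : ℤ, m.natAbs + n.natAbs ≤ k ∧
      (N : ℤ) ∣ (m * a + n * b - j)) :
    ∀ v : ZMod (2 * N), ∃ l ≤ 2 * k + 1,
      DWalk (NAstep (2 * N) (-1) (2 * (b - a) - 1) (2 * a + 1) (-2 * b + 1)) 0 v l := by
  haveI : NeZero (2 * N) := ⟨by omega⟩
  intro v
  have main : ∀ w : ZMod (2 * N), Even w.val → ∃ l ≤ 2 * k,
      DWalk (NAstep (2 * N) (-1) (2 * (b - a) - 1) (2 * a + 1) (-2 * b + 1)) 0 w l := by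
    intro w hw
    obtain ⟨t, ht⟩ := hw
    obtain ⟨m, n, hmn, hdvd⟩ := hcov t
    refine ⟨2 * (m.natAbs + n.natAbs), by omega, ?_⟩
    have hwalk := reach_even N a b (m.natAbs + n.natAbs) m n rfl
    have heq : ((2 * (m * a + n * b) : ℤ) : ZMod (2 * N)) = w := by
      have h1 : ((2 * (m * a + n * b) : ℤ) : ZMod (2 * N)) - ((2 * (t : ℤ) : ℤ) : ZMod (2 * N)) = 0 := by
        rw [← Int.cast_sub, ZMod.intCast_zmod_eq_zero_iff_dvd]
        obtain ⟨q, hq⟩ := hdvd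
        exact ⟨q, by push_cast; linarith [hq]⟩
      have h2 : ((2 * (t : ℤ) : ℤ) : ZMod (2 * N)) = w := by
        have : ((w.val : ℤ) : ZMod (2 * N)) = w := by
          push_cast
          rw [ZMod.natCast_val, ZMod.cast_id]
        rw [← this, ht]
        push_cast
        ring
      rw [← h2]
      linear_combination h1
    rwa [heq] at hwalk
  by_cases hv : Even v.val
  · obtain ⟨l, hl, hw⟩ := main v hv
    exact ⟨l, by omega, hw⟩
  · have hv1 : Even (v + 1).val := by
      rw [even_iff_phi] at hv ⊢
      have : phi N v = 1 := by
        rcases (by decide : ∀ x : ZMod 2, x = 0 ∨ x = 1) (phi N v) with h | h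
        · exact absurd h hv
        · exact h
      rw [map_add, this, map_one]
      decide
    obtain ⟨l, hl, hw⟩ := main (v + 1) hv1
    refine ⟨l + 1, by omega, DWalk.trans hw ?_⟩
    refine ⟨fun i => if i = 0 then v + 1 else v, rfl, rfl, ?_⟩
    intro i hi
    interval_cases i
    simp only [if_true, one_ne_zero, if_false]
    refine Or.inl ⟨hv1, Or.inl ?_⟩
    push_cast
    ring
end

section
/- If a digraph G obtained from a double-step graph of diameter k as a New Amsterdam digraph NA(2N; −1, 2(b−a)−1, 2a+1, −2b+1) contains a vertex i of the double-step graph with dist(0, i) = k, then the diameter D of the New Amsterdam digraph satisfies D ≥ 2k. -/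
namespace DWalk

variable {V : Type*} {R : V → V → Prop} {u v w : V} {n : ℕ}

theorem zero_iff : DWalk R u v 0 ↔ u = v :=
  ⟨fun ⟨f, h0, h1, _⟩ => h0 ▸ h1, fun h => ⟨fun _ => u, rfl, h, by simp⟩⟩

theorem succ_iff : DWalk R u w (n + 1) ↔ ∃ v, DWalk R u v n ∧ R v w := by
  constructor
  · rintro ⟨f, h0, hw, hf⟩
    exact ⟨f n, ⟨f, h0, rfl, fun i hi => hf i (by omega)⟩, hw ▸ hf n n.lt_succ_self⟩
  · rintro ⟨v, ⟨f, h0, hv, hf⟩, hvw⟩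
    refine ⟨fun i => if i ≤ n then f i else w, by simpa using h0, by simp, fun i hi => ?_⟩
    rcases Nat.lt_succ_iff_lt_or_eq.1 hi with hi | rfl
    · simpa [hi.le, Nat.succ_le_of_lt hi] using hf i hi
    · simpa [hv] using hvw

theorem map_eq_add_length {M : Type*} [AddMonoidWithOne M] (φ : V → M)
    (hφ : ∀ x y, R x y → φ y = φ x + 1) (h : DWalk R u v n) : φ v = φ u + n := by
  induction n generalizing v with
  | zero => simp [zero_iff.1 h]
  | succ n ih =>
    obtain ⟨w, hw, hwv⟩ := succ_iff.1 h
    rw [hφ w v hwv, ih hw, Nat.cast_succ, add_assoc]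

theorem exists_walk_length_le {G : SimpleGraph V} (hR : ∀ x y, R x y → x = y ∨ G.Adj x y)
    (h : DWalk R u v n) : ∃ p : G.Walk u v, p.length ≤ n := by
  induction n generalizing v with
  | zero => exact ⟨.copy .nil rfl (zero_iff.1 h), by simp⟩
  | succ n ih =>
    obtain ⟨w, hw, hwv⟩ := succ_iff.1 h
    obtain ⟨p, hp⟩ := ih hw
    rcases hR w v hwv with rfl | hadj
    · exact ⟨p, by omega⟩
    · exact ⟨p.concat hadj, by simp [hp]⟩

theorem dist_le {G : SimpleGraph V} (hR : ∀ x y, R x y → x = y ∨ G.Adj x y)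
    (h : DWalk R u v n) : G.dist u v ≤ n :=
  let ⟨p, hp⟩ := exists_walk_length_le hR h
  (SimpleGraph.dist_le p).trans hp

end DWalk

namespace ZMod

abbrev parityHom (N : ℕ) : ZMod (2 * N) →+* ZMod 2 := castHom (dvd_mul_right 2 N) (ZMod 2)

theorem even_val_iff_parityHom_eq_zero {N : ℕ} [NeZero N] (x : ZMod (2 * N)) :
    Even x.val ↔ parityHom N x = 0 := by
  rw [castHom_apply, cast_eq_val, natCast_eq_zero_iff_even]

/-- `y ↦ 2 y`, identifying `ZMod N` with the even residues of `ZMod (2 * N)`. -/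
def doubleHom (N : ℕ) : ZMod N →+ ZMod (2 * N) :=
  lift N ⟨(AddMonoidHom.mulLeft 2).comp (Int.castAddHom _), by
    simp only [AddMonoidHom.comp_apply, Int.coe_castAddHom, AddMonoidHom.coe_mulLeft,
      Int.cast_natCast]
    exact_mod_cast natCast_self (2 * N)⟩

@[simp]
theorem doubleHom_intCast (N : ℕ) (c : ℤ) : doubleHom N c = 2 * c :=
  lift_coe _ _ _

theorem doubleHom_injective (N : ℕ) : Function.Injective (doubleHom N) := by
  refine (injective_iff_map_eq_zero _).2 fun y hy => ?_
  obtain ⟨c, rfl⟩ := intCast_surjective y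
  rw [doubleHom_intCast, ← Int.cast_ofNat, ← Int.cast_mul, intCast_zmod_eq_zero_iff_dvd] at hy
  rw [intCast_zmod_eq_zero_iff_dvd]
  push_cast at hy
  exact Int.dvd_of_mul_dvd_mul_left two_ne_zero hy

@[simp]
theorem parityHom_doubleHom (N : ℕ) (y : ZMod N) : parityHom N (doubleHom N y) = 0 := by
  obtain ⟨c, rfl⟩ := intCast_surjective y
  rw [doubleHom_intCast, map_mul, map_ofNat]
  exact zero_mul _

end ZMod

theorem NAstep.parityHom_eq_add_one {N : ℕ} {α β γ δ : ℤ} (hα : Odd α) (hβ : Odd β)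
    (hγ : Odd γ) (hδ : Odd δ) {x y : ZMod (2 * N)} (h : NAstep (2 * N) α β γ δ x y) :
    ZMod.parityHom N y = ZMod.parityHom N x + 1 := by
  have step_odd : ∀ c : ℤ, Odd c → y = x + c → ZMod.parityHom N y = ZMod.parityHom N x + 1 := by
    rintro c hc rfl
    rw [map_add, map_intCast, ZMod.intCast_eq_one_iff_odd.2 hc]
  rcases h with ⟨-, h | h⟩ | ⟨-, h | h⟩
  exacts [step_odd α hα h, step_odd β hβ h, step_odd γ hγ h, step_odd δ hδ h]

section DoubleStep

open ZMod

def DoubleStep (N : ℕ) (a b : ℤ) (x y : ZMod N) : Prop :=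
  y = x + a ∨ y = x - a ∨ y = x + b ∨ y = x - b

abbrev DoubleStep.toNA (N : ℕ) (a b : ℤ) : ZMod (2 * N) → ZMod (2 * N) → Prop :=
  NAstep (2 * N) (-1) (2 * (b - a) - 1) (2 * a + 1) (-2 * b + 1)

variable {N : ℕ} {a b : ℤ}

theorem DoubleStep.toNA_parityHom {x y : ZMod (2 * N)} (h : DoubleStep.toNA N a b x y) :
    parityHom N y = parityHom N x + 1 :=
  NAstep.parityHom_eq_add_one (by decide) ⟨b - a - 1, by ring⟩ ⟨a, by ring⟩ ⟨-b, by ring⟩ h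

theorem DoubleStep.even_of_dWalk_toNA {u v : ZMod N} {l : ℕ}
    (h : DWalk (DoubleStep.toNA N a b) (doubleHom N u) (doubleHom N v) l) : Even l := by
  have := h.map_eq_add_length (parityHom N) fun _ _ => DoubleStep.toNA_parityHom
  rwa [parityHom_doubleHom, parityHom_doubleHom, zero_add, eq_comm,
    natCast_eq_zero_iff_even] at this

variable [NeZero N]

theorem DoubleStep.of_toNA_toNA {x : ZMod N} {y z : ZMod (2 * N)}
    (hxy : DoubleStep.toNA N a b (doubleHom N x) y) (hyz : DoubleStep.toNA N a b y z) :
    ∃ x', DoubleStep N a b x x' ∧ doubleHom N x' = z := by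
  have hx : Even (doubleHom N x).val := by
    rw [even_val_iff_parityHom_eq_zero, parityHom_doubleHom]
  have hy : ¬ Even y.val := by
    rw [even_val_iff_parityHom_eq_zero, DoubleStep.toNA_parityHom hxy, parityHom_doubleHom]
    decide
  have hxy' := (hxy.resolve_right fun h => h.1 hx).2
  have hyz' := (hyz.resolve_left fun h => hy h.1).2
  rcases hxy' with rfl | rfl <;> rcases hyz' with rfl | rfl
  · refine ⟨x + a, Or.inl rfl, ?_⟩
    rw [map_add, doubleHom_intCast]; push_cast; ring
  · refine ⟨x - b, Or.inr (Or.inr (Or.inr rfl)), ?_⟩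
    rw [map_sub, doubleHom_intCast]; push_cast; ring
  · refine ⟨x + b, Or.inr (Or.inr (Or.inl rfl)), ?_⟩
    rw [map_add, doubleHom_intCast]; push_cast; ring
  · refine ⟨x - a, Or.inr (Or.inl rfl), ?_⟩
    rw [map_sub, doubleHom_intCast]; push_cast; ring

theorem DoubleStep.exists_dWalk_of_dWalk_toNA {u : ZMod N} {w : ZMod (2 * N)} {m : ℕ}
    (h : DWalk (DoubleStep.toNA N a b) (doubleHom N u) w (2 * m)) :
    ∃ v, doubleHom N v = w ∧ DWalk (DoubleStep N a b) u v m := by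
  induction m generalizing w with
  | zero => exact ⟨u, DWalk.zero_iff.1 h, DWalk.zero_iff.2 rfl⟩
  | succ m ih =>
    obtain ⟨y, hy, hyw⟩ := DWalk.succ_iff.1 h
    obtain ⟨x, hx, hxy⟩ := DWalk.succ_iff.1 hy
    obtain ⟨v, rfl, hv⟩ := ih hx
    obtain ⟨v', hvv', rfl⟩ := DoubleStep.of_toNA_toNA hxy hyw
    exact ⟨v', rfl, DWalk.succ_iff.2 ⟨v, hv, hvv'⟩⟩

theorem DoubleStep.two_mul_dist_le {G : SimpleGraph (ZMod N)}
    (hG : ∀ x y, DoubleStep N a b x y → x = y ∨ G.Adj x y) {u v : ZMod N} {l : ℕ}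
    (h : DWalk (DoubleStep.toNA N a b) (doubleHom N u) (doubleHom N v) l) :
    2 * G.dist u v ≤ l := by
  obtain ⟨m, rfl⟩ := DoubleStep.even_of_dWalk_toNA h
  rw [← two_mul] at h ⊢
  obtain ⟨v', hv', hm⟩ := DoubleStep.exists_dWalk_of_dWalk_toNA h
  rw [← doubleHom_injective N hv']
  exact Nat.mul_le_mul_left 2 (hm.dist_le hG)

end DoubleStep

theorem stmt_7_general (N : ℕ) (hN : 1 ≤ N) (a b : ℤ) (k D : ℕ)
    (G : SimpleGraph (ZMod N))
    (hG : ∀ i j : ZMod N, G.Adj i j ↔ i ≠ j ∧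
      (j = i + (a : ZMod N) ∨ j = i - (a : ZMod N) ∨
       j = i + (b : ZMod N) ∨ j = i - (b : ZMod N)))
    (i : ZMod N) (hi : G.dist 0 i = k)
    (hD : ∀ u v : ZMod (2 * N), ∃ l ≤ D,
      DWalk (NAstep (2 * N) (-1) (2 * (b - a) - 1) (2 * a + 1) (-2 * b + 1)) u v l) :
    2 * k ≤ D := by
  have : NeZero N := ⟨by omega⟩
  obtain ⟨l, hlD, hwalk⟩ := hD (ZMod.doubleHom N 0) (ZMod.doubleHom N i)
  have hdist := DoubleStep.two_mul_dist_le
    (fun x y hxy => or_iff_not_imp_left.2 fun hne => (hG x y).2 ⟨hne, hxy⟩) hwalk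
  omega

theorem stmt_7 (N : ℕ) (hN : 1 ≤ N) (a b : ℤ) (k D : ℕ)
    (G : SimpleGraph (ZMod N))
    (hG : ∀ i j : ZMod N, G.Adj i j ↔ i ≠ j ∧
      (j = i + (a : ZMod N) ∨ j = i - (a : ZMod N) ∨
       j = i + (b : ZMod N) ∨ j = i - (b : ZMod N)))
    (i : ZMod N) (hreach : G.Reachable 0 i) (hi : G.dist 0 i = k)
    (hD : ∀ u v : ZMod (2 * N), ∃ l ≤ D,
      DWalk (NAstep (2 * N) (-1) (2 * (b - a) - 1) (2 * a + 1) (-2 * b + 1)) u v l) :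
    2 * k ≤ D :=
  stmt_7_general N hN a b k D G hG i hi hD
end

section
/- For every integer k ≥ 1 and every N with 2(k−1)² + 2(k−1) + 1 < N ≤ 2k² + 2k + 1, the circulant graph on Z_N with connection set {±k, ±(k+1)} has diameter exactly k; equivalently, every residue mod N can be written as m·k + n·(k+1) (mod N) with |m| + |n| ≤ k, and some residue requires |m| + |n| = k. -/
/-! For the covering half, every integer `v` with `|v| ≤ k² + k` is `m k + n (k + 1)` with
`|m| + |n| ≤ k`; since `N ≤ 2k² + 2k + 1`, the balanced residue `Int.bmod j N` is such an integer.
For the other half, `(m, n) ↦ m r + n (r + 1)` is injective on the ℓ¹-ball of radius `r` into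
`[-(r² + r), r² + r]`, so that ball has at most `2r² + 2r + 1 < N` points for `r = k - 1`,
and some residue mod `N` is not reached from it. -/

theorem exists_mul_add_mul_succ_eq_of_abs_le (r : ℕ) {v : ℤ} (hv : |v| ≤ r ^ 2 + r) :
    ∃ m n : ℤ, m.natAbs + n.natAbs ≤ r ∧ m * r + n * (r + 1) = v := by
  -- With `2v + r = (2r+1)s + t`, `0 ≤ t ≤ 2r`, the choice `n = v - sr`, `m = s - n` works:
  -- both `|s|` and `|s - 2n| = |r - t|` are at most `r`, and `|s - n| + |n|` is one of them.
  obtain ⟨hv₁, hv₂⟩ := abs_le.1 hv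
  have hpos : (0 : ℤ) < 2 * r + 1 := by positivity
  set s := (2 * v + r) / (2 * r + 1)
  set t := (2 * v + r) % (2 * r + 1)
  have hdiv : (2 * r + 1) * s + t = 2 * v + r := Int.mul_ediv_add_emod _ _
  have ht₀ : 0 ≤ t := Int.emod_nonneg _ hpos.ne'
  have ht₁ : t < 2 * r + 1 := Int.emod_lt_of_pos _ hpos
  have hs₁ : s ≤ r := by nlinarith
  have hs₀ : -r ≤ s := by nlinarith
  refine ⟨s - (v - s * r), v - s * r, ?_, by ring⟩
  have hsn : s - 2 * (v - s * r) = r - t := by linear_combination hdiv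
  omega

theorem eq_zero_of_mul_add_mul_succ_eq_zero {r : ℕ} {a b : ℤ}
    (hab : a.natAbs + b.natAbs ≤ 2 * r) (h : a * r + b * (r + 1) = 0) : a = 0 ∧ b = 0 := by
  have ha : a = (r + 1) * (a + b) := by linear_combination -h
  have hb : b = -(r * (a + b)) := by linear_combination h
  rcases lt_trichotomy (a + b) 0 with hc | hc | hc
  · have : a ≤ -(r + 1) := by nlinarith
    have : (r : ℤ) ≤ b := by nlinarith
    omega
  · rw [hc] at ha hb
    simp [ha, hb]
  · have : (r : ℤ) + 1 ≤ a := by nlinarith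
    have : b ≤ -r := by nlinarith
    omega

theorem abs_mul_add_mul_succ_le {r : ℕ} {m n : ℤ} (hmn : m.natAbs + n.natAbs ≤ r) :
    |m * r + n * (r + 1)| ≤ r ^ 2 + r := by
  have hm : |m| + |n| ≤ r := by
    rw [Int.abs_eq_natAbs, Int.abs_eq_natAbs]; exact_mod_cast hmn
  calc |m * r + n * (r + 1)| ≤ |m| * r + |n| * (r + 1) := by
        refine (abs_add_le _ _).trans ?_
        rw [abs_mul, abs_mul, Nat.abs_cast, abs_of_nonneg (by positivity : (0 : ℤ) ≤ r + 1)]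
    _ ≤ (|m| + |n|) * (r + 1) := by nlinarith [abs_nonneg m]
    _ ≤ r ^ 2 + r := by nlinarith

noncomputable def l1Ball (r : ℕ) : Finset (ℤ × ℤ) :=
  (Finset.Icc (-(r : ℤ)) r ×ˢ Finset.Icc (-(r : ℤ)) r).filter
    fun p => p.1.natAbs + p.2.natAbs ≤ r

theorem mem_l1Ball {r : ℕ} {p : ℤ × ℤ} : p ∈ l1Ball r ↔ p.1.natAbs + p.2.natAbs ≤ r := by
  simp only [l1Ball, Finset.mem_filter, Finset.mem_product, Finset.mem_Icc]
  omega

theorem card_l1Ball_le (r : ℕ) : (l1Ball r).card ≤ 2 * r ^ 2 + 2 * r + 1 := by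
  calc (l1Ball r).card ≤ (Finset.Icc (-((r : ℤ) ^ 2 + r)) (r ^ 2 + r)).card := by
        refine Finset.card_le_card_of_injOn (fun p => p.1 * r + p.2 * (r + 1)) ?_ ?_
        · intro p hp
          rw [Finset.mem_coe, Finset.mem_Icc, ← abs_le]
          exact abs_mul_add_mul_succ_le (mem_l1Ball.1 hp)
        · intro p hp q hq hpq
          have hp' := mem_l1Ball.1 hp
          have hq' := mem_l1Ball.1 hq
          obtain ⟨h₁, h₂⟩ := eq_zero_of_mul_add_mul_succ_eq_zero (r := r) (a := p.1 - q.1)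
            (b := p.2 - q.2) (by omega) (by simp only at hpq; linear_combination hpq)
          exact Prod.ext (by omega) (by omega)
    _ = 2 * r ^ 2 + 2 * r + 1 := by
        rw [Int.card_Icc, ← Int.toNat_natCast (2 * r ^ 2 + 2 * r + 1)]
        push_cast
        ring_nf

theorem exists_forall_not_dvd_sub_of_card_lt {α : Type*} (s : Finset α) (f : α → ℤ) {N : ℕ}
    (hs : s.card < N) : ∃ j : ℤ, ∀ p ∈ s, ¬ (N : ℤ) ∣ f p - j := by
  obtain ⟨j, hj, hjs⟩ := Finset.exists_mem_notMem_of_card_lt_card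
    (s := s.image fun p => f p % N) (t := Finset.Ico (0 : ℤ) N)
    (by simpa using Finset.card_image_le.trans_lt hs)
  refine ⟨j, fun p hp hdvd => hjs (Finset.mem_image.2 ⟨p, hp, ?_⟩)⟩
  obtain ⟨hj₀, hj₁⟩ := Finset.mem_Ico.1 hj
  rw [← Int.emod_eq_of_lt hj₀ hj₁]
  exact (Int.modEq_iff_dvd.2 hdvd).symm

theorem stmt_8_general (k : ℕ) (N : ℕ)
    (h1 : 2 * (k - 1) ^ 2 + 2 * (k - 1) + 1 < N)
    (h2 : N ≤ 2 * k ^ 2 + 2 * k + 1) :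
    (∀ j : ℤ, ∃ m n : ℤ, m.natAbs + n.natAbs ≤ k ∧
      (N : ℤ) ∣ (m * k + n * (k + 1) - j)) ∧
    (∃ j : ℤ, ∀ m n : ℤ, (N : ℤ) ∣ (m * k + n * (k + 1) - j) →
      k ≤ m.natAbs + n.natAbs) := by
  refine ⟨fun j => ?_, ?_⟩
  · have hN : 0 < N := by omega
    have hN' : (N : ℤ) ≤ 2 * k ^ 2 + 2 * k + 1 := by exact_mod_cast h2
    have hlo := Int.le_bmod (x := j) hN
    have hhi := Int.bmod_le (x := j) hN
    obtain ⟨m, n, hmn, hv⟩ := exists_mul_add_mul_succ_eq_of_abs_le k (v := j.bmod N)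
      (abs_le.2 ⟨by omega, by omega⟩)
    exact ⟨m, n, hmn, hv ▸ Int.ModEq.dvd (Int.bmod_emod : j.bmod N ≡ j [ZMOD N]).symm⟩
  · obtain ⟨j, hj⟩ := exists_forall_not_dvd_sub_of_card_lt (l1Ball (k - 1))
      (fun p => p.1 * k + p.2 * (k + 1)) ((card_l1Ball_le (k - 1)).trans_lt h1)
    refine ⟨j, fun m n hdvd => ?_⟩
    by_contra hlt
    exact hj (m, n) (mem_l1Ball.2 (by omega)) hdvd

theorem stmt_8 (k : ℕ) (hk : 1 ≤ k) (N : ℕ)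
    (h1 : 2 * (k - 1) ^ 2 + 2 * (k - 1) + 1 < N)
    (h2 : N ≤ 2 * k ^ 2 + 2 * k + 1) :
    (∀ j : ℤ, ∃ m n : ℤ, m.natAbs + n.natAbs ≤ k ∧
      (N : ℤ) ∣ (m * k + n * (k + 1) - j)) ∧
    (∃ j : ℤ, ∀ m n : ℤ, (N : ℤ) ∣ (m * k + n * (k + 1) - j) →
      k ≤ m.natAbs + n.natAbs) :=
  stmt_8_general k N h1 h2
end

section
/- For every integer k ≥ 1, every residue class j modulo N = 2k² + 2k + 1 can be written as j ≡ m·k + n·(k+1) (mod N) for integers m, n with |m| + |n| ≤ k. -/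
/-!
Every `j` is congruent modulo `N = 2(k² + k) + 1` to some `A` with `|A| ≤ k² + k`. For any `u`,
the pair `(m, n) = (u(k+1) - A, A - uk)` solves `mk + n(k+1) = A`, with `m + n = u` and
`n - m = 2A - u(2k+1)`. As `|m| + |n| = max (|m + n|) (|n - m|)`, it remains to write
`2A = u(2k+1) + v` with balanced base-`(2k+1)` digits `|u|, |v| ≤ k`, which is possible
precisely because `|2A| ≤ 2k(k+1)`.
-/

theorem Int.abs_bmod_two_mul_add_one_le (x : ℤ) (d : ℕ) : |x.bmod (2 * d + 1)| ≤ d := by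
  have hlo := Int.le_bmod (x := x) (m := 2 * d + 1) (by omega)
  have hhi := Int.bmod_le (x := x) (m := 2 * d + 1) (by omega)
  push_cast at hlo hhi
  rw [abs_le]
  omega

theorem exists_abs_le_abs_sub_mul_le (d : ℕ) {x : ℤ} (hx : |x| ≤ 2 * d * (d + 1)) :
    ∃ u : ℤ, |u| ≤ d ∧ |x - u * (2 * d + 1)| ≤ d := by
  set u := x.bdiv (2 * d + 1)
  have hv : x - u * (2 * d + 1) = x.bmod (2 * d + 1) := by
    have := Int.bmod_add_bdiv' x (2 * d + 1)
    push_cast at this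
    linarith
  have hv_le : |x - u * (2 * d + 1)| ≤ d := hv ▸ Int.abs_bmod_two_mul_add_one_le x d
  refine ⟨u, ?_, hv_le⟩
  have hmul : |u| * (2 * d + 1) < (d + 1) * (2 * d + 1) :=
    calc |u| * (2 * d + 1) = |x - (x - u * (2 * d + 1))| := by
          rw [sub_sub_cancel, abs_mul, abs_of_pos (by positivity : (0 : ℤ) < 2 * d + 1)]
      _ ≤ |x| + |x - u * (2 * d + 1)| := abs_sub _ _
      _ < (d + 1) * (2 * d + 1) := by linarith
  have := lt_of_mul_lt_mul_right hmul (by positivity)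
  omega

theorem exists_natAbs_add_natAbs_le_mul_add_mul_succ_eq (k : ℕ) {A : ℤ} (hA : |A| ≤ k ^ 2 + k) :
    ∃ m n : ℤ, m.natAbs + n.natAbs ≤ k ∧ m * k + n * (k + 1) = A := by
  obtain ⟨u, hu, hv⟩ := exists_abs_le_abs_sub_mul_le k (x := 2 * A)
    (by rw [abs_mul, abs_two]; linarith)
  refine ⟨u * (k + 1) - A, A - u * k, ?_, by ring⟩
  have hsum : (u * (k + 1) - A) + (A - u * k) = u := by ring
  have hdiff : (A - u * k) - (u * (k + 1) - A) = 2 * A - u * (2 * k + 1) := by ring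
  generalize u * (k + 1) - A = m at hsum hdiff
  generalize A - u * k = n at hsum hdiff
  rw [abs_le] at hu hv
  omega

theorem stmt_9_general (k : ℕ) (j : ℤ) :
    ∃ m n : ℤ, m.natAbs + n.natAbs ≤ k ∧
      ((2 * k ^ 2 + 2 * k + 1 : ℤ)) ∣ (m * k + n * (k + 1) - j) := by
  have hN : ((2 * (k ^ 2 + k) + 1 : ℕ) : ℤ) = 2 * k ^ 2 + 2 * k + 1 := by push_cast; ring
  have hA := Int.abs_bmod_two_mul_add_one_le j (k ^ 2 + k)
  push_cast at hA
  obtain ⟨m, n, hmn, hrepr⟩ := exists_natAbs_add_natAbs_le_mul_add_mul_succ_eq k hA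
  refine ⟨m, n, hmn, ?_⟩
  rw [hrepr, ← hN]
  exact Int.dvd_bmod_sub_self

theorem stmt_9 (k : ℕ) (hk : 1 ≤ k) (j : ℤ) :
    ∃ m n : ℤ, m.natAbs + n.natAbs ≤ k ∧
      ((2 * k ^ 2 + 2 * k + 1 : ℤ)) ∣ (m * k + n * (k + 1) - j) :=
  stmt_9_general k j
end

section
/- For every integer k ≥ 1, the map sending a pair (m, n) of integers with |m| + |n| ≤ k to the residue of m·k + n·(k+1) modulo 2k² + 2k + 1 is a bijection from {(m,n) ∈ Z² : |m| + |n| ≤ k} onto Z_{2k²+2k+1}. -/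
theorem stmt_10 (k : ℕ) (hk : 1 ≤ k) :
    Set.BijOn
      (fun p : ℤ × ℤ => ((p.1 * k + p.2 * (k + 1) : ℤ) : ZMod (2 * k ^ 2 + 2 * k + 1)))
      {p : ℤ × ℤ | p.1.natAbs + p.2.natAbs ≤ k} Set.univ := by
  have hk' : (1 : ℤ) ≤ (k : ℤ) := by exact_mod_cast hk
  set N : ℕ := 2 * k ^ 2 + 2 * k + 1 with hNdef
  haveI : NeZero N := ⟨by positivity⟩
  have hNZ : (N : ℤ) = 2 * (k : ℤ) ^ 2 + 2 * k + 1 := by push_cast [hNdef]; ring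
  refine ⟨fun p _ => trivial, ?_, ?_⟩
  · -- InjOn
    rintro ⟨m1, n1⟩ h1 ⟨m2, n2⟩ h2 heq
    simp only [Set.mem_setOf_eq] at h1 h2
    simp only at heq
    have hdvd : (N : ℤ) ∣ (m2 * k + n2 * (k + 1)) - (m1 * k + n1 * (k + 1)) :=
      ((ZMod.intCast_eq_intCast_iff _ _ _).mp heq).dvd
    obtain ⟨m, hm⟩ : ∃ m : ℤ, m = m2 - m1 := ⟨_, rfl⟩
    obtain ⟨n, hn⟩ : ∃ n : ℤ, n = n2 - n1 := ⟨_, rfl⟩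
    have hdvd' : (N : ℤ) ∣ m * k + n * (k + 1) := by
      have : m * (k : ℤ) + n * (k + 1) =
          (m2 * k + n2 * (k + 1)) - (m1 * k + n1 * (k + 1)) := by rw [hm, hn]; ring
      rw [this]; exact hdvd
    have habs : |m| + |n| ≤ 2 * (k : ℤ) := by
      have h1' : m.natAbs + n.natAbs ≤ 2 * k := by rw [hm, hn]; omega
      have := Int.abs_eq_natAbs m
      have := Int.abs_eq_natAbs n
      omega
    have hlt : |m * (k : ℤ) + n * (k + 1)| < (N : ℤ) := by
      have h5 : |m * (k : ℤ) + n * (k + 1)| ≤ |m| * k + |n| * (k + 1) := by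
        calc |m * (k : ℤ) + n * (k + 1)| ≤ |m * (k : ℤ)| + |n * (k + 1)| := abs_add_le _ _
          _ = |m| * k + |n| * (k + 1) := by
              rw [abs_mul, abs_mul, abs_of_nonneg (by positivity : (0:ℤ) ≤ (k:ℤ)),
                abs_of_nonneg (by positivity : (0:ℤ) ≤ (k:ℤ) + 1)]
      rw [hNZ]
      nlinarith [abs_nonneg m, abs_nonneg n]
    have h0 : m * (k : ℤ) + n * (k + 1) = 0 := Int.eq_zero_of_abs_lt_dvd hdvd' hlt
    obtain ⟨s, hs⟩ : ∃ s : ℤ, s = m + n := ⟨_, rfl⟩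
    have hns : n = -(s * k) := by rw [hs]; linear_combination h0
    have hms : m = s * ((k : ℤ) + 1) := by rw [hs]; linear_combination -h0
    have hs0 : s = 0 := by
      by_contra hcon
      have h1s : 1 ≤ |s| := Int.one_le_abs hcon
      have hnab : |n| = |s| * k := by rw [hns, abs_neg, abs_mul,
        abs_of_nonneg (by positivity : (0:ℤ) ≤ (k:ℤ))]
      have hmab : |m| = |s| * ((k : ℤ) + 1) := by rw [hms, abs_mul,
        abs_of_nonneg (by positivity : (0:ℤ) ≤ (k:ℤ) + 1)]
      nlinarith
    have hmz : m = 0 := by rw [hms, hs0]; ring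
    have hnz : n = 0 := by rw [hns, hs0]; ring
    have hm1 : m1 = m2 := by omega
    have hn1 : n1 = n2 := by omega
    simp [hm1, hn1]
  · -- SurjOn
    rintro t -
    obtain ⟨x, hx⟩ : ∃ x : ℤ, x = (ZMod.val t : ℤ) := ⟨_, rfl⟩
    have hx0 : 0 ≤ x := by rw [hx]; positivity
    have hxN : x < (N : ℤ) := by rw [hx]; exact_mod_cast ZMod.val_lt t
    obtain ⟨v, hv⟩ : ∃ v : ℤ, v = if x ≤ (k : ℤ) ^ 2 + k then x else x - N := ⟨_, rfl⟩
    have hvabs : |v| ≤ (k : ℤ) ^ 2 + k := by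
      rw [hv]; split_ifs with h
      · rw [abs_of_nonneg hx0]; exact h
      · rw [abs_of_nonpos (by omega)]
        rw [hNZ] at hxN ⊢
        omega
    have hvcast : ((v : ℤ) : ZMod N) = t := by
      rw [hv]; split_ifs with h
      · rw [hx]; simp [ZMod.intCast_cast, ZMod.natCast_val, ZMod.cast_id]
      · rw [Int.cast_sub, Int.cast_natCast, ZMod.natCast_self, sub_zero, hx]
        simp [ZMod.natCast_val, ZMod.cast_id]
    have hvub : v ≤ (k : ℤ) ^ 2 + k := (abs_le.mp hvabs).2
    have hvlb : -((k : ℤ) ^ 2 + k) ≤ v := (abs_le.mp hvabs).1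
    obtain ⟨q, hq⟩ : ∃ q : ℤ, q = (2 * v + k) / (2 * (k : ℤ) + 1) := ⟨_, rfl⟩
    obtain ⟨r, hr⟩ : ∃ r : ℤ, r = (2 * v + k) % (2 * (k : ℤ) + 1) := ⟨_, rfl⟩
    have hdm : 2 * v + (k : ℤ) = (2 * (k : ℤ) + 1) * q + r := by
      rw [hq, hr]; exact (Int.mul_ediv_add_emod _ _).symm
    have hr0 : 0 ≤ r := by rw [hr]; exact Int.emod_nonneg _ (by omega)
    have hr1 : r < 2 * (k : ℤ) + 1 := by rw [hr]; exact Int.emod_lt_of_pos _ (by omega)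
    have hq1 : q ≤ k := by
      by_contra hcon
      push_neg at hcon
      have hle : (k : ℤ) + 1 ≤ q := by omega
      have := mul_le_mul_of_nonneg_left hle (by positivity : (0:ℤ) ≤ 2 * (k:ℤ) + 1)
      nlinarith
    have hq2 : -(k : ℤ) ≤ q := by
      by_contra hcon
      push_neg at hcon
      have hle : q ≤ -(k : ℤ) - 1 := by omega
      have := mul_le_mul_of_nonneg_left hle (by positivity : (0:ℤ) ≤ 2 * (k:ℤ) + 1)
      nlinarith
    obtain ⟨a, ha⟩ : ∃ a : ℤ, a = ((k : ℤ) + 1) * q - v := ⟨_, rfl⟩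
    obtain ⟨b, hb⟩ : ∃ b : ℤ, b = v - (k : ℤ) * q := ⟨_, rfl⟩
    refine ⟨(a, b), ?_, ?_⟩
    · simp only [Set.mem_setOf_eq]
      have e1 : a + b = q := by rw [ha, hb]; ring
      have e2 : a - b = (k : ℤ) - r := by rw [ha, hb]; linear_combination -hdm
      omega
    · simp only
      have : a * (k : ℤ) + b * ((k : ℤ) + 1) = v := by rw [ha, hb]; ring
      rw [this, hvcast]
end
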